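/- For α ∈ (1,∞), positive definite X and Y on ℂ^d: sup over positive definite density operators τ of Tr{X^{1/2} Y^{(1−α)/α} X^{1/2} τ^{(α−1)/α}} = ‖X^{1/2} Y^{(1−α)/α} X^{1/2}‖_α = (Tr[(Y^{(1−α)/2α} X Y^{(1−α)/2α})^α])^{1/α}. -/

import Mathlib

/-!
Write `W = X^{1/2} Y^{(1-α)/α} X^{1/2}` as `B† B` with `B = Y^{(1-α)/2α} X^{1/2}`. Since `B† B` and
`B B†` have the same characteristic polynomial, they have the same eigenvalues, which gives the
second equality.

For the first, let `W = ∑ μ_k u_k u_k†` and `τ = ∑ t_l v_l v_l†`. Then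
`Tr(W τ^{(α-1)/α}) = ∑_l w_l t_l^{(α-1)/α}` with `w = P μ`, where `P_lk = |⟨v_l, u_k⟩|²` is doubly
stochastic. Hölder with the conjugate exponent `α/(α-1)` bounds this by `‖w‖_α (∑ t_l)^{(α-1)/α}
= ‖w‖_α`, and Jensen gives `‖P μ‖_α ≤ ‖μ‖_α`. The bound is attained at `τ = W^α / Tr W^α`.
-/

open Matrix Kronecker BigOperators
open scoped Classical ComplexOrder

/-- Apply a real function to a Hermitian matrix via the functional calculus
(eigenvalue decomposition); junk value `0` on non-Hermitian input. -/
noncomputable def matFun {n : Type} [Fintype n] [DecidableEq n]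
    (f : ℝ → ℝ) (A : Matrix n n ℂ) : Matrix n n ℂ :=
  if hA : A.IsHermitian then
    (hA.eigenvectorUnitary : Matrix n n ℂ) *
      Matrix.diagonal (fun i => (f (hA.eigenvalues i) : ℂ)) *
      (star (hA.eigenvectorUnitary : Matrix n n ℂ))
  else 0

/-- The unnormalized maximally entangled vector `∑ i, |i⟩⊗|i⟩`. -/
def gammaVec (n : Type) [DecidableEq n] : n × n → ℂ :=
  fun p => if p.1 = p.2 then 1 else 0

/-- Partial trace over the second tensor factor. -/
noncomputable def ptraceB {a b : Type} [Fintype b]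
    (X : Matrix (a × b) (a × b) ℂ) : Matrix a a ℂ :=
  fun i j => ∑ k, X (i, k) (j, k)

/-- Matrix power `A ^ p` (real exponent) via the functional calculus. -/
noncomputable def mpow {n : Type} [Fintype n] [DecidableEq n]
    (A : Matrix n n ℂ) (p : ℝ) : Matrix n n ℂ :=
  matFun (fun x => x ^ p) A

open scoped MatrixOrder

namespace Matrix

variable {n : Type} [Fintype n] [DecidableEq n] {A : Matrix n n ℂ}

lemma IsHermitian.mpow_eq_cfc (hA : A.IsHermitian) (p : ℝ) :
    mpow A p = cfc (fun x : ℝ => x ^ p) A := by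
  rw [mpow, matFun, dif_pos hA, hA.cfc_eq, IsHermitian.cfc, Unitary.conjStarAlgAut_apply]
  rfl

lemma IsHermitian.trace_cfc (hA : A.IsHermitian) (f : ℝ → ℝ) :
    (cfc f A).trace = ∑ i, (f (hA.eigenvalues i) : ℂ) := by
  rw [hA.cfc_eq, IsHermitian.cfc, Unitary.conjStarAlgAut_apply, trace_mul_cycle,
    Unitary.coe_star_mul_self, one_mul, trace_diagonal]
  rfl

lemma posDef_mpow (hA : A.PosDef) (p : ℝ) : (mpow A p).PosDef := by
  rw [hA.isHermitian.mpow_eq_cfc]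
  exact ((cfc_isStrictlyPositive_iff _ A (A.finite_real_spectrum.continuousOn _)).2
    fun x hx => Real.rpow_pos_of_pos (hA.isStrictlyPositive.spectrum_pos hx) p).posDef

lemma mpow_mul_mpow (hA : A.PosDef) (p q : ℝ) :
    mpow A p * mpow A q = mpow A (p + q) := by
  simp only [hA.isHermitian.mpow_eq_cfc]
  rw [← cfc_mul _ _ A (A.finite_real_spectrum.continuousOn _)
    (A.finite_real_spectrum.continuousOn _)]
  exact cfc_congr fun x hx => (Real.rpow_add (hA.isStrictlyPositive.spectrum_pos hx) p q).symm

lemma IsHermitian.mpow_one (hA : A.IsHermitian) : mpow A 1 = A := by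
  simp only [hA.mpow_eq_cfc, Real.rpow_one]
  exact cfc_id' ℝ A

lemma trace_mpow_conjTranspose_mul_self (B : Matrix n n ℂ) (p : ℝ) :
    (mpow (Bᴴ * B) p).trace = (mpow (B * Bᴴ) p).trace := by
  have hBB := isHermitian_conjTranspose_mul_self B
  have hBB' := isHermitian_mul_conjTranspose_self B
  rw [hBB.mpow_eq_cfc, hBB'.mpow_eq_cfc, hBB.trace_cfc, hBB'.trace_cfc,
    (hBB.eigenvalues_eq_eigenvalues_iff hBB').2 (charpoly_mul_comm Bᴴ B)]

lemma normSq_mem_doublyStochastic {U : Matrix n n ℂ} (hU : U ∈ unitaryGroup n ℂ) :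
    of (fun i j => Complex.normSq (U i j)) ∈ doublyStochastic ℝ n := by
  have hrow (i : n) : ∑ j, Complex.normSq (U i j) = 1 := by
    have h := congrFun (congrFun (mem_unitaryGroup_iff.1 hU) i) i
    simp only [mul_apply, star_apply, Complex.star_def, Complex.mul_conj, one_apply_eq] at h
    exact_mod_cast h
  have hcol (j : n) : ∑ i, Complex.normSq (U i j) = 1 := by
    have h := congrFun (congrFun (mem_unitaryGroup_iff'.1 hU) j) j
    simp only [mul_apply, star_apply, Complex.star_def, mul_comm (starRingEnd ℂ _),
      Complex.mul_conj, one_apply_eq] at h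
    exact_mod_cast h
  exact mem_doublyStochastic_iff_sum.2 ⟨fun i j => Complex.normSq_nonneg _, hrow, hcol⟩

lemma sum_rpow_mulVec_le_of_mem_doublyStochastic {M : Matrix n n ℝ}
    (hM : M ∈ doublyStochastic ℝ n) {x : n → ℝ} (hx : ∀ i, 0 ≤ x i) {p : ℝ} (hp : 1 ≤ p) :
    ∑ i, (M *ᵥ x) i ^ p ≤ ∑ i, x i ^ p := by
  have jensen (i : n) : (M *ᵥ x) i ^ p ≤ (M *ᵥ fun j => x j ^ p) i := by
    simpa only [mulVec, dotProduct, smul_eq_mul] using (convexOn_rpow hp).map_sum_le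
      (fun j _ => nonneg_of_mem_doublyStochastic hM) (sum_row_of_mem_doublyStochastic hM i)
      (fun j _ => hx j)
  calc ∑ i, (M *ᵥ x) i ^ p ≤ ∑ i, (M *ᵥ fun j => x j ^ p) i := Finset.sum_le_sum fun i _ => jensen i
    _ = ∑ i, x i ^ p := sum_mulVec_of_mem_doublyStochastic hM

lemma mul_diagonal_mul_star_apply_self (M : Matrix n n ℂ) (μ : n → ℝ) (i : n) :
    (M * diagonal (fun k => (μ k : ℂ)) * star M) i i =
      ((of fun i j => Complex.normSq (M i j)) *ᵥ μ) i := by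
  simp only [mul_apply, diagonal_apply, mul_ite, mul_zero, Finset.sum_ite_eq',
    Finset.mem_univ, if_true, star_apply, Complex.star_def, mulVec, dotProduct, of_apply]
  push_cast
  refine Finset.sum_congr rfl fun k _ => ?_
  rw [← Complex.mul_conj]
  ring

lemma trace_conj_diagonal_mul_conj_diagonal (U V : Matrix n n ℂ) (μ s : n → ℝ) :
    (U * diagonal (fun k => (μ k : ℂ)) * star U *
        (V * diagonal (fun k => (s k : ℂ)) * star V)).trace =
      ∑ l, (((of fun i j => Complex.normSq ((star V * U) i j)) *ᵥ μ) l * s l : ℝ) := by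
  have hconj : star V * (U * diagonal (fun k => (μ k : ℂ)) * star U) * V =
      (star V * U) * diagonal (fun k => (μ k : ℂ)) * star (star V * U) := by
    simp only [star_mul, star_star, Matrix.mul_assoc]
  rw [← Matrix.mul_assoc, trace_mul_cycle, ← Matrix.mul_assoc, hconj]
  simp only [trace, diag, mul_diagonal, mul_diagonal_mul_star_apply_self]
  push_cast
  rfl

lemma IsHermitian.re_trace_mul_cfc {W τ : Matrix n n ℂ} (hW : W.IsHermitian) (hτ : τ.IsHermitian)
    (f : ℝ → ℝ) :
    (W * cfc f τ).trace.re = ∑ l, ((of fun i j => Complex.normSq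
      ((star (hτ.eigenvectorUnitary : Matrix n n ℂ) * hW.eigenvectorUnitary) i j)) *ᵥ
        hW.eigenvalues) l * f (hτ.eigenvalues l) := by
  conv_lhs => rw [hW.spectral_theorem, hτ.cfc_eq, IsHermitian.cfc]
  simp only [Unitary.conjStarAlgAut_apply, Function.comp_def]
  exact congrArg Complex.re (trace_conj_diagonal_mul_conj_diagonal _ _ _ _)

lemma PosSemidef.re_trace_mul_mpow_le {W τ : Matrix n n ℂ} (hW : W.PosSemidef)
    (hτ : τ.PosSemidef) (hτ1 : τ.trace = 1) {α : ℝ} (hα : 1 < α) :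
    (W * mpow τ ((α - 1) / α)).trace.re ≤ (∑ i, hW.1.eigenvalues i ^ α) ^ (1 / α) := by
  set P := of fun i j => Complex.normSq
    ((star (hτ.1.eigenvectorUnitary : Matrix n n ℂ) * hW.1.eigenvectorUnitary) i j)
  have hP : P ∈ doublyStochastic ℝ n := normSq_mem_doublyStochastic
    (mul_mem (Unitary.star_mem hτ.1.eigenvectorUnitary.2) hW.1.eigenvectorUnitary.2)
  set w := P *ᵥ hW.1.eigenvalues
  have hw (i : n) : 0 ≤ w i := Finset.sum_nonneg fun j _ =>
    mul_nonneg (nonneg_of_mem_doublyStochastic hP) (hW.eigenvalues_nonneg j)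
  set t := hτ.1.eigenvalues
  have hβ := Real.HolderConjugate.conjExponent hα
  have hpβ : (α - 1) / α * α.conjExponent = 1 := by
    have : α - 1 ≠ 0 := by linarith
    rw [Real.conjExponent]
    field_simp
  have ht (i : n) : (t i ^ ((α - 1) / α)) ^ α.conjExponent = t i := by
    rw [← Real.rpow_mul (hτ.eigenvalues_nonneg i), hpβ, Real.rpow_one]
  have hsum_t : ∑ i, t i = 1 := by
    have h := congrArg Complex.re hτ.1.trace_eq_sum_eigenvalues
    rw [hτ1] at h
    simpa [t] using h.symm
  calc (W * mpow τ ((α - 1) / α)).trace.re = ∑ i, w i * t i ^ ((α - 1) / α) := by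
        rw [hτ.1.mpow_eq_cfc, hW.1.re_trace_mul_cfc hτ.1]
    _ ≤ (∑ i, w i ^ α) ^ (1 / α) * (∑ i, (t i ^ ((α - 1) / α)) ^ α.conjExponent)
          ^ (1 / α.conjExponent) :=
        Real.inner_le_Lp_mul_Lq_of_nonneg _ hβ (fun i _ => hw i)
          (fun i _ => Real.rpow_nonneg (hτ.eigenvalues_nonneg i) _)
    _ = (∑ i, w i ^ α) ^ (1 / α) := by simp only [ht, hsum_t, Real.one_rpow, mul_one]
    _ ≤ (∑ i, hW.1.eigenvalues i ^ α) ^ (1 / α) := by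
        refine Real.rpow_le_rpow (Finset.sum_nonneg fun i _ => Real.rpow_nonneg (hw i) α)
          (sum_rpow_mulVec_le_of_mem_doublyStochastic hP hW.eigenvalues_nonneg hα.le) ?_
        positivity

lemma PosDef.exists_re_trace_mul_mpow_eq [Nonempty n] {W : Matrix n n ℂ} (hW : W.PosDef)
    {α : ℝ} (hα : 1 < α) :
    ∃ τ : Matrix n n ℂ, τ.PosDef ∧ τ.trace = 1 ∧
      (W * mpow τ ((α - 1) / α)).trace.re = (∑ i, hW.1.eigenvalues i ^ α) ^ (1 / α) := by
  set μ := hW.1.eigenvalues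
  set c := ∑ i, μ i ^ α
  have hc : 0 < c := Finset.sum_pos (fun i _ => Real.rpow_pos_of_pos (hW.eigenvalues_pos i) α)
    Finset.univ_nonempty
  have hcont (f : ℝ → ℝ) : ContinuousOn f (spectrum ℝ W) := W.finite_real_spectrum.continuousOn f
  set τ := cfc (fun x => c⁻¹ * x ^ α) W
  have hτ : τ.PosDef := ((cfc_isStrictlyPositive_iff _ W (hcont _)).2 fun x hx =>
    mul_pos (inv_pos.2 hc) (Real.rpow_pos_of_pos (hW.isStrictlyPositive.spectrum_pos hx) α)).posDef
  refine ⟨τ, hτ, ?_, ?_⟩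
  · rw [hW.1.trace_cfc]
    push_cast
    rw [← Finset.mul_sum]
    exact_mod_cast inv_mul_cancel₀ hc.ne'
  · have hα0 : 0 < α := by linarith
    have hterm (i : n) :
        μ i * (c⁻¹ * μ i ^ α) ^ ((α - 1) / α) = c ^ (-((α - 1) / α)) * μ i ^ α := by
      have hμ := hW.eigenvalues_pos i
      rw [Real.mul_rpow (inv_nonneg.2 hc.le) (Real.rpow_nonneg hμ.le _), Real.inv_rpow hc.le,
        ← Real.rpow_neg hc.le, ← Real.rpow_mul hμ.le, mul_div_cancel₀ _ hα0.ne', mul_left_comm,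
        ← Real.rpow_one_add' hμ.le (by linarith), add_sub_cancel]
    have hexp : -((α - 1) / α) + 1 = 1 / α := by field_simp; ring
    rw [hτ.1.mpow_eq_cfc,
      ← cfc_comp' _ _ W ((W.finite_real_spectrum.image _).continuousOn _) (hcont _)]
    nth_rewrite 1 [← cfc_id' ℝ W]
    rw [← cfc_mul _ _ W (hcont _) (hcont _), hW.1.trace_cfc, Complex.re_sum]
    simp only [Complex.ofReal_re]
    rw [Finset.sum_congr rfl fun i _ => hterm i, ← Finset.mul_sum, ← Real.rpow_add_one hc.ne', hexp]

lemma PosDef.iSup_re_trace_mul_mpow {W : Matrix n n ℂ} (hW : W.PosDef) {α : ℝ} (hα : 1 < α) :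
    ⨆ τ : {τ : Matrix n n ℂ // τ.PosDef ∧ τ.trace = 1},
        (W * mpow (τ : Matrix n n ℂ) ((α - 1) / α)).trace.re =
      (mpow W α).trace.re ^ (1 / α) := by
  have htrace : (mpow W α).trace.re = ∑ i, hW.1.eigenvalues i ^ α := by
    simp [hW.1.mpow_eq_cfc, hW.1.trace_cfc]
  rw [htrace]
  rcases isEmpty_or_nonempty n with hn | hn
  · have : IsEmpty {τ : Matrix n n ℂ // τ.PosDef ∧ τ.trace = 1} :=
      ⟨fun τ => by simpa [trace] using τ.2.2⟩
    rw [Real.iSup_of_isEmpty, Finset.univ_eq_empty, Finset.sum_empty,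
      Real.zero_rpow (by simp; linarith)]
  · obtain ⟨τ₀, hτ₀, hτ₀1, hτ₀eq⟩ := hW.exists_re_trace_mul_mpow_eq hα
    have hle (τ : {τ : Matrix n n ℂ // τ.PosDef ∧ τ.trace = 1}) :=
      hW.posSemidef.re_trace_mul_mpow_le τ.2.1.posSemidef τ.2.2 hα
    have : Nonempty {τ : Matrix n n ℂ // τ.PosDef ∧ τ.trace = 1} := ⟨⟨τ₀, hτ₀, hτ₀1⟩⟩
    exact le_antisymm (ciSup_le hle)
      (hτ₀eq ▸ le_ciSup ⟨_, Set.forall_mem_range.2 hle⟩ ⟨τ₀, hτ₀, hτ₀1⟩)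

end Matrix

/-- Hölder variational formula for `α ∈ (1,∞)`:
`sup_{τ>0,Trτ=1} Tr{X^{1/2} Y^{(1−α)/α} X^{1/2} τ^{(α−1)/α}}
  = (Tr[(X^{1/2} Y^{(1−α)/α} X^{1/2})^α])^{1/α}
  = (Tr[(Y^{(1−α)/2α} X Y^{(1−α)/2α})^α])^{1/α}`. -/
theorem stmt_15 (d : ℕ) (α : ℝ) (hα : 1 < α)
    (X Y : Matrix (Fin d) (Fin d) ℂ) (hX : X.PosDef) (hY : Y.PosDef) :
    (⨆ τ : {τ : Matrix (Fin d) (Fin d) ℂ // τ.PosDef ∧ τ.trace = 1},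
        ((mpow X (1/2) * mpow Y ((1 - α)/α) * mpow X (1/2) *
            mpow (τ : Matrix (Fin d) (Fin d) ℂ) ((α - 1)/α)).trace.re)) =
      ((mpow (mpow X (1/2) * mpow Y ((1 - α)/α) * mpow X (1/2)) α).trace.re) ^ (1/α) ∧
    ((mpow (mpow X (1/2) * mpow Y ((1 - α)/α) * mpow X (1/2)) α).trace.re) ^ (1/α) =
      ((mpow (mpow Y ((1 - α)/(2*α)) * X * mpow Y ((1 - α)/(2*α))) α).trace.re) ^ (1/α) := by
  have hq : (1 - α) / (2 * α) + (1 - α) / (2 * α) = (1 - α) / α := by field_simp; ring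
  set q := (1 - α) / (2 * α)
  set B := mpow Y q * mpow X (1/2)
  have hBH : Bᴴ = mpow X (1/2) * mpow Y q := by
    rw [conjTranspose_mul, (posDef_mpow hX _).1, (posDef_mpow hY _).1]
  have hBB : Bᴴ * B = mpow X (1/2) * mpow Y ((1 - α)/α) * mpow X (1/2) := by
    rw [hBH, ← hq, ← mpow_mul_mpow hY]
    simp only [B, Matrix.mul_assoc]
  have hBB' : B * Bᴴ = mpow Y q * X * mpow Y q := calc
    B * Bᴴ = mpow Y q * (mpow X (1/2) * mpow X (1/2)) * mpow Y q := by
      rw [hBH]; simp only [B, Matrix.mul_assoc]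
    _ = mpow Y q * X * mpow Y q := by rw [mpow_mul_mpow hX, add_halves, hX.1.mpow_one]
  have hB : (Bᴴ * B).PosDef := PosDef.conjTranspose_mul_self B
    (mulVec_injective_iff_isUnit.2 ((posDef_mpow hY q).isUnit.mul (posDef_mpow hX _).isUnit))
  rw [← hBB, ← hBB', ← trace_mpow_conjTranspose_mul_self]
  exact ⟨hB.iSup_re_trace_mul_mpow hα, rfl⟩
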